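/- Let d ≥ 1 and let a be a Schwartz function on ℝ^{2d} and f, g Schwartz functions on ℝ^d. Define (Tψ)(x,ξ) = ψ(ξ, −x) for functions ψ on ℝ^{2d}. Then ( a(x,D)f , g )_{L²(ℝ^d)} = (2π)^{−d/2} ( T(𝓕a) , V_f g )_{L²(ℝ^{2d})}, where 𝓕a is the Fourier transform of a on ℝ^{2d} and V_f g is the short-time Fourier transform of g with window f. -/

import Mathlib

open MeasureTheory Real Complex
open scoped ENNReal NNReal InnerProductSpace

noncomputable section

/-- ℝ^d as a Euclidean space. -/
abbrev Ed (d : ℕ) : Type := EuclideanSpace ℝ (Fin d)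

/-- ℝ^{2d}, written as pairs (x, ξ). -/
abbrev Pd (d : ℕ) : Type := Ed d × Ed d

/-- The standard symplectic form σ((x,ξ),(y,η)) = ⟨y,ξ⟩ − ⟨x,η⟩. -/
def sympForm {d : ℕ} (X Y : Pd d) : ℝ := ⟪Y.1, X.2⟫_ℝ - ⟪X.1, Y.2⟫_ℝ

/-- The symplectic Fourier transform (𝓕_σ a)(X) = π^{-d} ∫ a(Y) e^{2iσ(X,Y)} dY. -/
def sFT {d : ℕ} (a : Pd d → ℂ) (X : Pd d) : ℂ :=
  ((π : ℝ) ^ d)⁻¹ • ∫ Y : Pd d, a Y * Complex.exp (2 * Complex.I * (sympForm X Y : ℂ))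

/-- The symplectic short-time Fourier transform 𝒱_φ a(X,Y) = 𝓕_σ(a φ(·−X))(Y). -/
def sSTFT {d : ℕ} (φ a : Pd d → ℂ) (X Y : Pd d) : ℂ :=
  sFT (fun Z => a Z * φ (Z - X)) Y

/-- The twisted convolution (a ∗_σ b)(X) = (2/π)^{d/2} ∫ a(X−Y) b(Y) e^{2iσ(X,Y)} dY. -/
def twConv {d : ℕ} (a b : Pd d → ℂ) (X : Pd d) : ℂ :=
  ((2 / π) ^ ((d : ℝ) / 2) : ℝ) •
    ∫ Y : Pd d, a (X - Y) * b Y * Complex.exp (2 * Complex.I * (sympForm X Y : ℂ))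

/-- The Weyl product a # b = (2π)^{-d/2} a ∗_σ (𝓕_σ b). -/
def weylProd {d : ℕ} (a b : Pd d → ℂ) (X : Pd d) : ℂ :=
  ((2 * π) ^ (-(d : ℝ) / 2) : ℝ) • twConv a (sFT b) X

/-- Polynomially moderate positive measurable weight functions (the class 𝒫). -/
def polyModerate {E : Type*} [NormedAddCommGroup E] [MeasurableSpace E] (ω : E → ℝ) : Prop :=
  (∀ x, 0 < ω x) ∧ Measurable ω ∧
    ∃ C : ℝ, 0 < C ∧ ∃ N : ℕ, ∀ x y, ω (x + y) ≤ C * ω x * (1 + ‖y‖) ^ N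

/-- Weighted mixed norm ‖F‖_{L^{p,q}_{1,(ω)}}: exponent p in the first (inner)
variable, exponent q in the second (outer) variable. -/
def mixedNorm1 {α β : Type*} [MeasureSpace α] [MeasureSpace β] (p q : ℝ≥0∞)
    (ω : α × β → ℝ) (F : α × β → ℂ) : ℝ≥0∞ :=
  eLpNorm (fun y : β => (eLpNorm (fun x : α => ‖F (x, y)‖ * ω (x, y)) p volume).toReal) q volume

/-- Weighted mixed norm ‖F‖_{L^{p,q}_{2,(ω)}}: exponent q in the second (inner)
variable, exponent p in the first (outer) variable. -/
def mixedNorm2 {α β : Type*} [MeasureSpace α] [MeasureSpace β] (p q : ℝ≥0∞)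
    (ω : α × β → ℝ) (F : α × β → ℂ) : ℝ≥0∞ :=
  eLpNorm (fun x : α => (eLpNorm (fun y : β => ‖F (x, y)‖ * ω (x, y)) q volume).toReal) p volume

/-- Weighted Lebesgue norm ‖a‖_{L^p_{(ω)}} = ‖a ω‖_{L^p}. -/
def wLpNorm {α : Type*} [MeasureSpace α] (p : ℝ≥0∞) (ω : α → ℝ) (a : α → ℂ) : ℝ≥0∞ :=
  eLpNorm (fun x => ‖a x‖ * ω x) p volume

/-- Short-time Fourier transform on ℝ^d. -/
def stft {d : ℕ} (φ f : Ed d → ℂ) (x ξ : Ed d) : ℂ :=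
  ((2 * π) ^ (-(d : ℝ) / 2) : ℝ) •
    ∫ y : Ed d, f y * (starRingEnd ℂ) (φ (y - x)) * Complex.exp (-(⟪y, ξ⟫_ℝ : ℂ) * Complex.I)

/-- Euclidean pairing on ℝ^{2d}. -/
def pairing2 {d : ℕ} (X Y : Pd d) : ℝ := ⟪X.1, Y.1⟫_ℝ + ⟪X.2, Y.2⟫_ℝ

/-- Short-time Fourier transform on ℝ^{2d}. -/
def stft2 {d : ℕ} (Φ F : Pd d → ℂ) (X Ξ : Pd d) : ℂ :=
  ((2 * π) ^ (-(2 * (d : ℝ)) / 2) : ℝ) •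
    ∫ Y : Pd d, F Y * (starRingEnd ℂ) (Φ (Y - X)) * Complex.exp (-(pairing2 Y Ξ : ℂ) * Complex.I)

/-- The Fourier transform on ℝ^{2d}. -/
def fourier2 {d : ℕ} (F : Pd d → ℂ) (Ξ : Pd d) : ℂ :=
  ((2 * π) ^ (-(2 * (d : ℝ)) / 2) : ℝ) •
    ∫ X : Pd d, F X * Complex.exp (-(pairing2 X Ξ : ℂ) * Complex.I)

/-- Kohn–Nirenberg pseudo-differential operator a(x,D). -/
def pseudoOp {d : ℕ} (a : Pd d → ℂ) (f : Ed d → ℂ) (x : Ed d) : ℂ :=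
  ((2 * π) ^ (-(d : ℝ)) : ℝ) •
    ∫ ξ : Ed d, ∫ y : Ed d, a (x, ξ) * f y * Complex.exp ((⟪x - y, ξ⟫_ℝ : ℂ) * Complex.I)

/-- L² pairing (f, g) = ∫ f conj(g). -/
def L2pair {α : Type*} [MeasureSpace α] (f g : α → ℂ) : ℂ :=
  ∫ x, f x * (starRingEnd ℂ) (g x)

/-- Cross-Wigner distribution. -/
def wigner {d : ℕ} (f g : Ed d → ℂ) (x ξ : Ed d) : ℂ :=
  ((2 * π) ^ (-(d : ℝ) / 2) : ℝ) •
    ∫ y : Ed d, f (x - (2⁻¹ : ℝ) • y) * (starRingEnd ℂ) (g (x + (2⁻¹ : ℝ) • y)) *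
      Complex.exp ((⟪y, ξ⟫_ℝ : ℂ) * Complex.I)

open scoped FourierTransform SchwartzMap ComplexConjugate

/-!
Let `K(x, w) = ∫ a(x, v) e^{-i⟨v, w⟩} dv` be the Fourier transform of the symbol in its second
variable, so that `a(x,D) f(x) = (2π)^{-d} ∫ f(y) K(x, y - x) dy`. For fixed `x`, `𝓕a(ξ, -x)` is
`(2π)^{-d}` times the Fourier transform of `K(·, -x)` at `ξ`, and `conj V_f g(x, ξ)` is
`(2π)^{-d/2}` times the inverse Fourier transform of the Schwartz function `conj g · f(· - x)`.
The multiplication formula `∫ 𝓕k · ψ = ∫ k · 𝓕ψ` and Fourier inversion for Schwartz functions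
therefore turn the `ξ`-integral into `(2π)^{-d/2} ∫ K(y, -x) conj g(y) f(y - x) dy`, and Fubini
with the substitution `y - x ↦ y` matches the two sides. Every interchange only needs
integrability: `|K(x, w)| ≤ ∫ |a(x, v)| dv`, which is integrable in `x`, and `𝓕a` is again a
Schwartz function while `V_f g` is bounded.
-/

instance {E F : Type*} [NormedAddCommGroup E] [NormedSpace ℝ E] [FiniteDimensional ℝ E]
    [MeasureSpace E] [BorelSpace E] [(volume : Measure E).IsAddHaarMeasure]
    [NormedAddCommGroup F] [NormedSpace ℝ F] [FiniteDimensional ℝ F]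
    [MeasureSpace F] [BorelSpace F] [(volume : Measure F).IsAddHaarMeasure] :
    (volume : Measure (E × F)).IsAddHaarMeasure :=
  Measure.prod.instIsAddHaarMeasure _ _

section Euclidean

variable {V : Type*} [NormedAddCommGroup V] [InnerProductSpace ℝ V] [FiniteDimensional ℝ V]
  [MeasurableSpace V] [BorelSpace V]

def angularFourier (k : V → ℂ) (ξ : V) : ℂ := ∫ u, k u * cexp (-(⟪u, ξ⟫_ℝ : ℂ) * I)

theorem angularFourier_eq_fourier (k : V → ℂ) (ξ : V) :
    angularFourier k ξ = 𝓕 k ((2 * π)⁻¹ • ξ) := by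
  rw [angularFourier, Real.fourier_eq']
  congr 1 with u
  rw [real_inner_smul_right, smul_eq_mul, mul_comm]
  congr 2
  push_cast
  field_simp

theorem angularFourier_neg_eq_fourierInv (k : V → ℂ) (ξ : V) :
    angularFourier k (-ξ) = 𝓕⁻ k ((2 * π)⁻¹ • ξ) := by
  rw [angularFourier_eq_fourier, Real.fourierInv_eq_fourier_neg, smul_neg]

theorem norm_angularFourier_le (k : V → ℂ) (ξ : V) : ‖angularFourier k ξ‖ ≤ ∫ u, ‖k u‖ := by
  refine (norm_integral_le_integral_norm _).trans_eq ?_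
  simp only [norm_mul, ← ofReal_neg, norm_exp_ofReal_mul_I, mul_one]

theorem integral_fourier_mul_eq_of_integrable {k ψ : V → ℂ} (hk : Integrable k)
    (hψ : Integrable ψ) : ∫ ξ, 𝓕 k ξ * ψ ξ = ∫ x, k x * 𝓕 ψ x := by
  simpa using! VectorFourier.integral_fourierIntegral_smul_eq_flip (L := innerₗ V)
    Real.continuous_fourierChar continuous_inner hk hψ

theorem integral_angularFourier_mul_angularFourier_neg {k : V → ℂ} (hk : Integrable k)
    (φ : 𝓢(V, ℂ)) :
    ∫ ξ, angularFourier k ξ * angularFourier φ (-ξ) =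
      ((2 * π) ^ Module.finrank ℝ V : ℝ) • ∫ u, k u * φ u := by
  simp_rw [angularFourier_neg_eq_fourierInv, angularFourier_eq_fourier]
  rw [Measure.integral_comp_inv_smul volume (f := fun ζ => 𝓕 k ζ * 𝓕⁻ ⇑φ ζ),
    ← SchwartzMap.fourierInv_coe, integral_fourier_mul_eq_of_integrable hk (𝓕⁻ φ).integrable,
    ← SchwartzMap.fourier_coe, FourierInvPair.fourier_fourierInv_eq, abs_of_pos (by positivity)]

theorem stronglyMeasurable_angularFourier_slice {a : V × V → ℂ} (ha : Continuous a) :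
    StronglyMeasurable fun p : V × V => angularFourier (fun v => a (p.1, v)) p.2 :=
  (show Continuous fun q : (V × V) × V => a (q.1.1, q.2) * cexp (-(⟪q.2, q.1.2⟫_ℝ : ℂ) * I)
    by fun_prop).stronglyMeasurable.integral_prod_right'

theorem integrable_angularFourier_slice (a : 𝓢(V × V, ℂ)) (w : V) :
    Integrable fun x => angularFourier (fun v => a (x, v)) w :=
  a.integrable.integral_norm_prod_left.mono'
    ((stronglyMeasurable_angularFourier_slice a.continuous).comp_measurable
      (measurable_id.prodMk measurable_const)).aestronglyMeasurable
    (ae_of_all _ fun _ => norm_angularFourier_le _ w)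

theorem integral_integral_angularFourier_slice_swap (a : 𝓢(V × V, ℂ)) (f g : 𝓢(V, ℂ)) :
    ∫ x, ∫ y, angularFourier (fun v => a (y, v)) (-x) * (conj (g y) * f (y - x)) =
      ∫ x, (∫ y, f y * angularFourier (fun v => a (x, v)) (y - x)) * conj (g x) := by
  set K : V → V → ℂ := fun x w => angularFourier (fun v => a (x, v)) w
  set κ : V → ℝ := fun x => ∫ v, ‖a (x, v)‖
  have hκ : Integrable κ := a.integrable.integral_norm_prod_left
  have hdom : Integrable
      (fun p : V × V => SchwartzMap.seminorm ℝ 0 0 g * (κ p.2 * ‖f (-(p.1 - p.2))‖))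
      (volume.prod volume) :=
    (hκ.convolution_integrand (ContinuousLinearMap.mul ℝ ℝ) f.integrable.comp_neg.norm).const_mul _
  have hint : Integrable (Function.uncurry fun x y => K y (-x) * (conj (g y) * f (y - x)))
      (volume.prod volume) := by
    refine hdom.mono' ?_ (ae_of_all _ fun ⟨x, y⟩ => ?_)
    · have hK : StronglyMeasurable fun p : V × V => K p.2 (-p.1) :=
        (stronglyMeasurable_angularFourier_slice a.continuous).comp_measurable
          (by fun_prop : Measurable fun p : V × V => (p.2, -p.1))
      exact (hK.mul (by fun_prop : Continuous fun p : V × V =>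
        conj (g p.2) * f (p.2 - p.1)).stronglyMeasurable).aestronglyMeasurable
    · simp only [Function.uncurry_apply_pair, norm_mul, RCLike.norm_conj, neg_sub]
      calc ‖K y (-x)‖ * (‖g y‖ * ‖f (y - x)‖)
          ≤ κ y * (SchwartzMap.seminorm ℝ 0 0 g * ‖f (y - x)‖) := by
            gcongr
            · exact norm_angularFourier_le _ _
            · exact SchwartzMap.norm_le_seminorm ℝ g _
        _ = _ := by ring
  rw [integral_integral_swap hint]
  congr 1 with y
  rw [← integral_sub_left_eq_self _ volume y, ← integral_mul_const]
  congr 1 with x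
  simp only [K, sub_sub_cancel, neg_sub]
  ring

end Euclidean

variable {d : ℕ}

-- Mathlib's Fourier transform of Schwartz functions needs an inner product space, and `Pd d`
-- carries the sup norm; `WithLp 2 (Pd d)` is the same space with the Euclidean structure.
def scaledToLp (d : ℕ) : Pd d ≃L[ℝ] WithLp 2 (Pd d) :=
  (WithLp.prodContinuousLinearEquiv 2 ℝ (Ed d) (Ed d)).symm.trans
    (ContinuousLinearEquiv.smulLeft (Units.mk0 (2 * π)⁻¹ (by positivity)))

theorem scaledToLp_apply (Ξ : Pd d) : scaledToLp d Ξ = (2 * π)⁻¹ • WithLp.toLp 2 Ξ := rfl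

def fourier2Schwartz (a : 𝓢(Pd d, ℂ)) : 𝓢(Pd d, ℂ) :=
  ((2 * π) ^ (-(2 * (d : ℝ)) / 2) : ℝ) •
    SchwartzMap.compCLMOfContinuousLinearEquiv ℂ (scaledToLp d) (𝓕
      (SchwartzMap.compCLMOfContinuousLinearEquiv ℂ (WithLp.prodContinuousLinearEquiv 2 ℝ _ _) a))

theorem coe_fourier2Schwartz (a : 𝓢(Pd d, ℂ)) : ⇑(fourier2Schwartz a) = fourier2 ⇑a := by
  ext Ξ
  simp only [fourier2Schwartz, fourier2, smul_apply, Function.comp_apply,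
    SchwartzMap.compCLMOfContinuousLinearEquiv_apply, SchwartzMap.fourier_coe, Real.fourier_eq']
  congr 1
  rw [← (WithLp.volume_preserving_ofLp (Ed d) (Ed d)).integral_comp
    (MeasurableEquiv.toLp 2 (Pd d)).symm.measurableEmbedding]
  congr 1 with Y
  have hphase : -2 * π * ⟪Y, scaledToLp d Ξ⟫_ℝ = -pairing2 Y.ofLp Ξ := by
    rw [scaledToLp_apply, real_inner_smul_right, WithLp.prod_inner_apply, pairing2]
    field_simp
  rw [hphase, smul_eq_mul, mul_comm]
  push_cast
  rfl

theorem pseudoOp_ae_eq (a : 𝓢(Pd d, ℂ)) (f : 𝓢(Ed d, ℂ)) :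
    ∀ᵐ x, pseudoOp a f x =
      ((2 * π) ^ (-(d : ℝ)) : ℝ) • ∫ y, f y * angularFourier (fun v => a (x, v)) (y - x) := by
  filter_upwards [(a.integrable (μ := volume)).prod_right_ae] with x hx
  have hint : Integrable (Function.uncurry fun ξ y : Ed d =>
      a (x, ξ) * f y * cexp ((⟪x - y, ξ⟫_ℝ : ℂ) * I)) (volume.prod volume) :=
    (hx.mul_prod f.integrable).norm.mono' (by fun_prop) (ae_of_all _ fun ⟨ξ, y⟩ => by
      simp [norm_exp_ofReal_mul_I])
  rw [pseudoOp, integral_integral_swap hint]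
  congr 2 with y
  rw [angularFourier, ← integral_const_mul]
  congr 1 with ξ
  rw [real_inner_comm, ← neg_sub y x, inner_neg_right]
  push_cast
  ring

theorem L2pair_pseudoOp (a : 𝓢(Pd d, ℂ)) (f g : 𝓢(Ed d, ℂ)) :
    L2pair (pseudoOp a f) g = ((2 * π) ^ (-(d : ℝ)) : ℝ) •
      ∫ x, (∫ y, f y * angularFourier (fun v => a (x, v)) (y - x)) * conj (g x) := by
  rw [L2pair, ← integral_smul]
  refine integral_congr_ae ?_
  filter_upwards [pseudoOp_ae_eq a f] with x hx
  rw [hx, smul_mul_assoc]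

theorem fourier2_eq_angularFourier (a : 𝓢(Pd d, ℂ)) (ξ η : Ed d) :
    fourier2 a (ξ, η) = ((2 * π) ^ (-(2 * (d : ℝ)) / 2) : ℝ) •
      angularFourier (fun u => angularFourier (fun v => a (u, v)) η) ξ := by
  have hint : Integrable fun X : Pd d => a X * cexp (-(pairing2 X (ξ, η) : ℂ) * I) :=
    a.integrable.norm.mono' (by unfold pairing2; fun_prop) (ae_of_all _ fun _ => by
      simp [← ofReal_neg, norm_exp_ofReal_mul_I])
  rw [fourier2, angularFourier, Measure.volume_eq_prod, integral_prod _ hint]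
  congr 2 with u
  rw [angularFourier, ← integral_mul_const]
  congr 1 with v
  rw [mul_assoc, ← Complex.exp_add, pairing2]
  push_cast
  ring_nf

theorem conj_stft (f g : 𝓢(Ed d, ℂ)) (x ξ : Ed d) :
    conj (stft f g x ξ) = ((2 * π) ^ (-(d : ℝ) / 2) : ℝ) •
      angularFourier (fun y => conj (g y) * f (y - x)) (-ξ) := by
  rw [stft, angularFourier, Complex.real_smul, Complex.real_smul, map_mul, Complex.conj_ofReal,
    ← integral_conj]
  congr 2 with y
  simp [← Complex.exp_conj]

theorem stronglyMeasurable_stft (f g : 𝓢(Ed d, ℂ)) :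
    StronglyMeasurable fun z : Pd d => stft f g z.1 z.2 := by
  unfold stft
  have hint : Continuous fun q : Pd d × Ed d =>
      g q.2 * conj (f (q.2 - q.1.1)) * cexp (-(⟪q.2, q.1.2⟫_ℝ : ℂ) * I) := by
    fun_prop
  exact (hint.stronglyMeasurable.integral_prod_right' (ν := volume)).const_smul
    ((2 * π) ^ (-(d : ℝ) / 2) : ℝ)

theorem norm_stft_le (f g : 𝓢(Ed d, ℂ)) (x ξ : Ed d) :
    ‖stft f g x ξ‖ ≤
      (2 * π) ^ (-(d : ℝ) / 2) * ((∫ y, ‖g y‖) * SchwartzMap.seminorm ℝ 0 0 f) := by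
  rw [stft, norm_smul, Real.norm_of_nonneg (by positivity), ← integral_mul_const]
  gcongr
  refine norm_integral_le_of_norm_le (g.integrable.norm.mul_const _) (ae_of_all _ fun y => ?_)
  simp only [norm_mul, RCLike.norm_conj, ← ofReal_neg, norm_exp_ofReal_mul_I, mul_one]
  gcongr
  exact SchwartzMap.norm_le_seminorm ℝ f _

theorem L2pair_fourier2_stft (a : 𝓢(Pd d, ℂ)) (f g : 𝓢(Ed d, ℂ)) :
    L2pair (fun z : Pd d => fourier2 a (z.2, -z.1)) (fun z : Pd d => stft f g z.1 z.2) =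
      ((2 * π) ^ (-(d : ℝ) / 2) : ℝ) •
        ∫ x, ∫ y, angularFourier (fun v => a (y, v)) (-x) * (conj (g y) * f (y - x)) := by
  let J : Pd d ≃L[ℝ] Pd d := (ContinuousLinearEquiv.prodComm ℝ _ _).trans
    ((ContinuousLinearEquiv.refl ℝ _).prodCongr (ContinuousLinearEquiv.neg ℝ))
  have hA : Integrable fun z : Pd d => fourier2 a (z.2, -z.1) := by
    refine (SchwartzMap.compCLMOfContinuousLinearEquiv ℂ J (fourier2Schwartz a)).integrable
      |>.congr (ae_of_all _ fun z => ?_)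
    simp [coe_fourier2Schwartz, J]
  have hint : Integrable fun z : Pd d => fourier2 a (z.2, -z.1) * conj (stft f g z.1 z.2) :=
    hA.mul_bdd (stronglyMeasurable_stft f g).aestronglyMeasurable.star
      (ae_of_all _ fun z => (RCLike.norm_conj _).trans_le (norm_stft_le f g z.1 z.2))
  rw [L2pair, Measure.volume_eq_prod, integral_prod _ hint, ← integral_smul]
  congr 1 with x
  let φ : 𝓢(Ed d, ℂ) := SchwartzMap.pairing (ContinuousLinearMap.mul ℂ ℂ)
    (SchwartzMap.postcompCLM Complex.conjCLE.toContinuousLinearMap g)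
    (SchwartzMap.compSubConstCLM ℂ x f)
  have hφ : ⇑φ = fun y => conj (g y) * f (y - x) := rfl
  simp_rw [fourier2_eq_angularFourier, conj_stft, smul_mul_smul_comm, integral_smul, ← hφ,
    integral_angularFourier_mul_angularFourier_neg (integrable_angularFourier_slice a (-x)) φ,
    finrank_euclideanSpace_fin, smul_smul]
  have hc : (2 * π) ^ (-(2 * (d : ℝ)) / 2) * (2 * π) ^ d = 1 := by
    rw [show -(2 * (d : ℝ)) / 2 = -d by ring, rpow_neg (by positivity), rpow_natCast,
      inv_mul_cancel₀ (by positivity)]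
  rw [hφ, mul_right_comm, hc, one_mul]

theorem stmt16_general (d : ℕ) (a : SchwartzMap (Pd d) ℂ)
    (f g : SchwartzMap (Ed d) ℂ) :
    L2pair (pseudoOp (⇑a) (⇑f)) (⇑g) =
      ((2 * π) ^ (-(d : ℝ) / 2) : ℝ) •
        L2pair (fun z : Pd d => fourier2 (⇑a) (z.2, -z.1))
          (fun z : Pd d => stft (⇑f) (⇑g) z.1 z.2) := by
  rw [L2pair_pseudoOp, L2pair_fourier2_stft, smul_smul, ← rpow_add (by positivity),
    integral_integral_angularFourier_slice_swap]
  congr 2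
  ring

theorem stmt16 (d : ℕ) (hd : 1 ≤ d) (a : SchwartzMap (Pd d) ℂ)
    (f g : SchwartzMap (Ed d) ℂ) :
    L2pair (pseudoOp (⇑a) (⇑f)) (⇑g) =
      ((2 * π) ^ (-(d : ℝ) / 2) : ℝ) •
        L2pair (fun z : Pd d => fourier2 (⇑a) (z.2, -z.1))
          (fun z : Pd d => stft (⇑f) (⇑g) z.1 z.2) :=
  stmt16_general d a f g
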